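/- arXiv:2101.10546 — 3 statements merged into one kernel-verified Lean document; each statement's English description precedes it below -/
import Mathlib

section
/- Let f: ℝⁿ → ℝ be differentiable, μ-strongly convex with L-Lipschitz gradient, 0 < μ ≤ L, and let x* be the point with ∇f(x*) = 0. Set c₁ = 2/(μ + L) and c₂ = 2μL/(μ + L). Then for any step size α with 0 < α ≤ c₁ and any x ∈ ℝⁿ, the steepest-descent update satisfies ‖x − α∇f(x) − x*‖² ≤ (1 − αc₂)‖x − x*‖². -/
/-!
With `h = f - (μ/2)‖·‖²`, convexity of `h` gives the lower bound
`h a + ⟪∇h a, b - a⟫ ≤ h b`, and the Lipschitz bound on `∇f` gives the upper bound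
`h b ≤ h a + ⟪∇h a, b - a⟫ + ((L - μ)/2)‖b - a‖²`. Comparing both bounds at a well-chosen point
makes `∇h` cocoercive, which unfolds to
`μL‖x - y‖² + ‖∇f x - ∇f y‖² ≤ (μ + L)⟪∇f x - ∇f y, x - y⟫`.
Taking `y = x*` and expanding `‖(x - x*) - α∇f x‖²`, this inequality absorbs the term
`α²‖∇f x‖²` as long as `α ≤ 2/(μ + L)`.
-/

open Set InnerProductSpace AffineMap
open scoped RealInnerProductSpace

variable {E : Type*} [NormedAddCommGroup E] [InnerProductSpace ℝ E]

section QuadraticBounds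

variable {g : E → ℝ} {G : E → E}

theorem inner_sub_sub_nonneg_of_forall_add_inner_le (hlow : ∀ a b, g a + ⟪G a, b - a⟫ ≤ g b)
    (x y : E) : 0 ≤ ⟪G x - G y, x - y⟫ := by
  have h₁ := hlow x y
  have h₂ := hlow y x
  rw [← neg_sub x y, inner_neg_right] at h₁
  rw [inner_sub_left]
  linarith

theorem add_inner_add_norm_sq_div_le_of_quadratic_bounds {M : ℝ} (hM : 0 < M)
    (hlow : ∀ a b, g a + ⟪G a, b - a⟫ ≤ g b)
    (hup : ∀ a b, g b ≤ g a + ⟪G a, b - a⟫ + M / 2 * ‖b - a‖ ^ 2) (x y : E) :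
    g y + ⟪G y, x - y⟫ + ‖G x - G y‖ ^ 2 / (2 * M) ≤ g x := by
  set u := G x - G y
  -- `z` minimises the quadratic upper model of `g - ⟪G y, ·⟫` at `x`
  set z := x - M⁻¹ • u
  have hzy : z - y = (x - y) - M⁻¹ • u := by simp only [z]; abel
  have hzx : z - x = -(M⁻¹ • u) := by simp only [z]; abel
  have h₁ := hlow y z
  have h₂ := hup x z
  rw [hzy, inner_sub_right, real_inner_smul_right] at h₁
  rw [hzx, inner_neg_right, real_inner_smul_right, norm_neg, norm_smul,
    Real.norm_of_nonneg (inv_nonneg.2 hM.le)] at h₂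
  have hu : M⁻¹ * ⟪G x, u⟫ - M⁻¹ * ⟪G y, u⟫ = 2 * (‖u‖ ^ 2 / (2 * M)) := by
    rw [← mul_sub, ← inner_sub_left]
    change M⁻¹ * ⟪u, u⟫ = _
    rw [real_inner_self_eq_norm_sq]
    field_simp
  have hsq : M / 2 * (M⁻¹ * ‖u‖) ^ 2 = ‖u‖ ^ 2 / (2 * M) := by field_simp
  linarith

theorem norm_sub_sq_le_mul_inner_of_quadratic_bounds {M : ℝ} (hM : 0 < M)
    (hlow : ∀ a b, g a + ⟪G a, b - a⟫ ≤ g b)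
    (hup : ∀ a b, g b ≤ g a + ⟪G a, b - a⟫ + M / 2 * ‖b - a‖ ^ 2) (x y : E) :
    ‖G x - G y‖ ^ 2 ≤ M * ⟪G x - G y, x - y⟫ := by
  have h₁ := add_inner_add_norm_sq_div_le_of_quadratic_bounds hM hlow hup x y
  have h₂ := add_inner_add_norm_sq_div_le_of_quadratic_bounds hM hlow hup y x
  rw [norm_sub_rev, ← neg_sub x y, inner_neg_right] at h₂
  have hhalf : ‖G x - G y‖ ^ 2 / (2 * M) + ‖G x - G y‖ ^ 2 / (2 * M) = ‖G x - G y‖ ^ 2 / M := by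
    field_simp; ring
  rw [← div_le_iff₀' hM, inner_sub_left]
  linarith

end QuadraticBounds

theorem norm_sub_smul_sq_le_of_inner_ge {u d : E} {μ L α : ℝ} (hμL : 0 < μ + L)
    (h : μ * L * ‖d‖ ^ 2 + ‖u‖ ^ 2 ≤ (μ + L) * ⟪u, d⟫) (hα₀ : 0 ≤ α) (hα₁ : α ≤ 2 / (μ + L)) :
    ‖d - α • u‖ ^ 2 ≤ (1 - α * (2 * μ * L / (μ + L))) * ‖d‖ ^ 2 := by
  have hexpand : ‖d - α • u‖ ^ 2 = ‖d‖ ^ 2 - 2 * α * ⟪u, d⟫ + α ^ 2 * ‖u‖ ^ 2 := by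
    rw [norm_sub_sq_real, real_inner_smul_right, norm_smul, Real.norm_of_nonneg hα₀,
      real_inner_comm]
    ring
  have hrhs : (μ + L) * ((1 - α * (2 * μ * L / (μ + L))) * ‖d‖ ^ 2)
      = (μ + L) * ‖d‖ ^ 2 - 2 * α * (μ * L * ‖d‖ ^ 2) := by
    field_simp
  have hα : α * (μ + L) ≤ 2 := (le_div_iff₀ hμL).1 hα₁
  rw [hexpand, ← mul_le_mul_iff_right₀ hμL, hrhs]
  nlinarith [mul_le_mul_of_nonneg_left h hα₀, mul_nonneg hα₀ (sq_nonneg ‖u‖)]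

variable [CompleteSpace E]

theorem HasGradientAt.sub_half_mul_norm_sq {f : E → ℝ} {g x : E} (hf : HasGradientAt f g x) (c : ℝ) :
    HasGradientAt (fun z => f z - c / 2 * ‖z‖ ^ 2) (g - c • x) x := by
  rw [hasGradientAt_iff_hasFDerivAt, map_sub, map_smul]
  refine (hf.hasFDerivAt.sub
    ((hasStrictFDerivAt_norm_sq x).hasFDerivAt.const_mul (c / 2))).congr_fderiv ?_
  ext y
  simp only [sub_apply, toDual_apply_apply, smul_apply, coe_innerSL_apply, nsmul_eq_mul,
    Nat.cast_ofNat, smul_eq_mul, sub_right_inj]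
  ring

theorem HasGradientAt.hasDerivAt_comp_lineMap {f : E → ℝ} {g x y : E} {t : ℝ}
    (hf : HasGradientAt f g (lineMap x y t)) :
    HasDerivAt (f ∘ lineMap x y) ⟪g, y - x⟫ t := by
  simpa using hf.hasFDerivAt.comp_hasDerivAt t hasDerivAt_lineMap

theorem ConvexOn.inner_gradient_le_sub {f : E → ℝ} {s : Set E} (hf : ConvexOn ℝ s f)
    {x y g : E} (hx : x ∈ s) (hy : y ∈ s) (hg : HasGradientAt f g x) :
    ⟪g, y - x⟫ ≤ f y - f x := by
  simpa [slope] using (hf.comp_affineMap (lineMap x y)).le_slope_of_hasDerivAt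
    (by simpa using hx) (by simpa using hy) zero_lt_one
    (HasGradientAt.hasDerivAt_comp_lineMap (by simpa using hg))

theorem apply_le_add_inner_add_sq_of_lipschitz_gradient {f : E → ℝ} {G : E → E} {L : ℝ}
    (hG : ∀ z, HasGradientAt f (G z) z) (hlip : ∀ a b, ‖G a - G b‖ ≤ L * ‖a - b‖) (x y : E) :
    f y ≤ f x + ⟪G x, y - x⟫ + L / 2 * ‖y - x‖ ^ 2 := by
  set φ : ℝ → ℝ := fun t => f (lineMap x y t) - t * ⟪G x, y - x⟫ - L / 2 * ‖y - x‖ ^ 2 * t ^ 2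
  have hφ : ∀ t, HasDerivAt φ (⟪G (lineMap x y t) - G x, y - x⟫ - L * ‖y - x‖ ^ 2 * t) t := by
    intro t
    refine HasDerivAt.congr_deriv (f := φ) (((hG (lineMap x y t)).hasDerivAt_comp_lineMap.sub
      ((hasDerivAt_id t).mul_const ⟪G x, y - x⟫)).sub
      (((hasDerivAt_id t).pow 2).const_mul (L / 2 * ‖y - x‖ ^ 2))) ?_
    simp only [inner_sub_left, _root_.id]
    ring
  have hφ_nonpos : ∀ t ∈ interior (Ici (0 : ℝ)), deriv φ t ≤ 0 := by
    intro t ht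
    rw [interior_Ici] at ht
    rw [(hφ t).deriv, sub_nonpos]
    calc ⟪G (lineMap x y t) - G x, y - x⟫ ≤ ‖G (lineMap x y t) - G x‖ * ‖y - x‖ :=
          real_inner_le_norm _ _
      _ ≤ L * ‖lineMap x y t - x‖ * ‖y - x‖ := by gcongr; exact hlip _ x
      _ = L * ‖y - x‖ ^ 2 * t := by
          rw [lineMap_apply_module', add_sub_cancel_right, norm_smul, Real.norm_of_nonneg ht.le]
          ring
  have hanti : AntitoneOn φ (Ici 0) :=
    antitoneOn_of_deriv_nonpos (convex_Ici 0)
      (fun t _ => (hφ t).continuousAt.continuousWithinAt)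
      (fun t _ => (hφ t).differentiableAt.differentiableWithinAt) hφ_nonpos
  have h := hanti self_mem_Ici (show (0 : ℝ) ≤ 1 from zero_le_one) zero_le_one
  simp only [φ, lineMap_apply_zero, lineMap_apply_one] at h
  linarith

theorem ConvexOn.mul_norm_sq_add_norm_gradient_sq_le_inner {f : E → ℝ} {G : E → E} {μ L : ℝ}
    (hsc : ConvexOn ℝ univ (fun z => f z - μ / 2 * ‖z‖ ^ 2)) (hμ : 0 ≤ μ) (hμL : μ ≤ L)
    (hG : ∀ z, HasGradientAt f (G z) z) (hlip : ∀ a b, ‖G a - G b‖ ≤ L * ‖a - b‖) (x y : E) :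
    μ * L * ‖x - y‖ ^ 2 + ‖G x - G y‖ ^ 2 ≤ (μ + L) * ⟪G x - G y, x - y⟫ := by
  set h : E → ℝ := fun z => f z - μ / 2 * ‖z‖ ^ 2
  set H : E → E := fun z => G z - μ • z
  have hlow : ∀ a b, h a + ⟪H a, b - a⟫ ≤ h b := fun a b => by
    linarith [hsc.inner_gradient_le_sub (mem_univ a) (mem_univ b) ((hG a).sub_half_mul_norm_sq μ)]
  have hup : ∀ a b, h b ≤ h a + ⟪H a, b - a⟫ + (L - μ) / 2 * ‖b - a‖ ^ 2 := fun a b => by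
    have hf := apply_le_add_inner_add_sq_of_lipschitz_gradient hG hlip a b
    have hsq : ‖b‖ ^ 2 = ‖a‖ ^ 2 + 2 * ⟪a, b - a⟫ + ‖b - a‖ ^ 2 := by
      rw [← norm_add_sq_real, add_sub_cancel]
    simp only [h, H, inner_sub_left, real_inner_smul_left]
    linear_combination hf - μ / 2 * hsq
  set u := G x - G y
  set d := x - y
  have hHu : H x - H y = u - μ • d := by simp only [H, u, d, smul_sub]; abel
  have hcoco : ‖u - μ • d‖ ^ 2 ≤ (L - μ) * ⟪u - μ • d, d⟫ := by
    rcases hμL.lt_or_eq with hlt | rfl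
    · rw [← hHu]
      exact norm_sub_sq_le_mul_inner_of_quadratic_bounds (sub_pos.2 hlt) hlow hup x y
    · have hmono := inner_sub_sub_nonneg_of_forall_add_inner_le hlow x y
      rw [hHu, inner_sub_left, real_inner_smul_left, real_inner_self_eq_norm_sq] at hmono
      rw [sub_self, zero_mul, norm_sub_sq_real, real_inner_smul_right, norm_smul,
        Real.norm_of_nonneg hμ]
      nlinarith [hlip x y, norm_nonneg u, norm_nonneg d]
  clear_value u d
  rw [norm_sub_sq_real, inner_sub_left, real_inner_smul_right, real_inner_smul_left, norm_smul,
    Real.norm_of_nonneg hμ, real_inner_self_eq_norm_sq] at hcoco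
  linear_combination hcoco

/-- One-step contraction of steepest descent: if `f : ℝⁿ → ℝ` is
differentiable, μ-strongly convex with L-Lipschitz gradient, `0 < μ ≤ L`,
`∇f(x*) = 0`, `c₁ = 2/(μ+L)`, `c₂ = 2μL/(μ+L)` and `0 < α ≤ c₁`, then for all
`x`, `‖x − α∇f(x) − x*‖² ≤ (1 − αc₂)‖x − x*‖²`. -/
theorem steepest_descent_one_step_contraction
    (n : ℕ) (f : EuclideanSpace ℝ (Fin n) → ℝ) (μ L : ℝ)
    (hμ : 0 < μ) (hμL : μ ≤ L)
    (hdiff : Differentiable ℝ f)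
    (hsc : ConvexOn ℝ Set.univ (fun x => f x - μ / 2 * ‖x‖ ^ 2))
    (hlip : ∀ x y : EuclideanSpace ℝ (Fin n),
      ‖gradient f x - gradient f y‖ ≤ L * ‖x - y‖)
    (xstar : EuclideanSpace ℝ (Fin n)) (hxstar : gradient f xstar = 0)
    (c₁ c₂ : ℝ) (hc₁ : c₁ = 2 / (μ + L)) (hc₂ : c₂ = 2 * μ * L / (μ + L))
    (α : ℝ) (hα0 : 0 < α) (hα1 : α ≤ c₁) :
    ∀ x : EuclideanSpace ℝ (Fin n),
      ‖x - α • gradient f x - xstar‖ ^ 2 ≤ (1 - α * c₂) * ‖x - xstar‖ ^ 2 := by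
  intro x
  have key := hsc.mul_norm_sq_add_norm_gradient_sq_le_inner hμ.le hμL
    (fun z => (hdiff z).hasGradientAt) hlip x xstar
  rw [hxstar, sub_zero] at key
  rw [sub_right_comm, hc₂]
  exact norm_sub_smul_sq_le_of_inner_ge (by linarith) key hα0.le (hc₁ ▸ hα1)
end

section
/- Let f: ℝⁿ → ℝ be differentiable, μ-strongly convex with L-Lipschitz gradient, 0 < μ ≤ L, and let x* be the point with ∇f(x*) = 0. Set c₁ = 2/(μ + L) and c₂ = 2μL/(μ + L), and fix a step size α with 0 < α ≤ c₁ (so that 0 ≤ 1 − αc₂ < 1). Then the steepest-descent iterates x(k+1) = x(k) − α∇f(x(k)) satisfy ‖x(k) − x*‖ ≤ (1 − αc₂)^{k/2} ‖x(0) − x*‖ for all k ≥ 0; in particular the iterates converge Q-linearly to x*. -/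
/-! The function `g = f - (μ/2)‖·‖²` is convex, and the Lipschitz bound on `∇f` gives
`⟪∇g z - ∇g w, z - w⟫ ≤ (L - μ)‖z - w‖²`. Comparing the tangent plane of `g` with this
quadratic upper model shows that `∇g` is co-coercive; written in terms of `∇f` this is
`μL‖z - w‖² + ‖∇f z - ∇f w‖² ≤ (μ + L)⟪∇f z - ∇f w, z - w⟫`. Expanding the square
`‖(z - α∇f z) - (x* - α∇f x*)‖²` with this inequality shows that a step with `α(μ + L) ≤ 2`
multiplies `‖z - x*‖²` by at most `1 - αc₂`, and iterating gives the rate. -/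

open Set InnerProductSpace
open scoped RealInnerProductSpace

section GradientInequalities

variable {E : Type*} [NormedAddCommGroup E] [InnerProductSpace ℝ E] [CompleteSpace E]
  {g : E → ℝ}

lemma HasGradientAt.hasDerivAt_comp_add_smul {G a v : E} {t : ℝ}
    (hg : HasGradientAt g G (a + t • v)) :
    HasDerivAt (fun s : ℝ => g (a + s • v)) ⟪G, v⟫ t := by
  have hline : HasDerivAt (fun s : ℝ => a + s • v) v t := by
    simpa using ((hasDerivAt_id t).smul_const v).const_add a
  exact (hasGradientAt_iff_hasFDerivAt.mp hg).comp_hasDerivAt t hline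

lemma ConvexOn.inner_le_sub_of_hasGradientAt {G a : E} (hconv : ConvexOn ℝ univ g)
    (hg : HasGradientAt g G a) (b : E) :
    ⟪G, b - a⟫ ≤ g b - g a := by
  have hline : ConvexOn ℝ univ (fun s : ℝ => g (a + s • (b - a))) := by
    have := hconv.comp_affineMap (AffineMap.lineMap a b : ℝ →ᵃ[ℝ] E)
    simpa [Function.comp_def, AffineMap.lineMap_apply_module', add_comm] using this
  have hd := HasGradientAt.hasDerivAt_comp_add_smul (t := 0) (v := b - a) (by simpa using hg)
  simpa [slope_def_field] using
    hline.le_slope_of_hasDerivAt (mem_univ 0) (mem_univ 1) one_pos hd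

variable {g' : E → E}

lemma ConvexOn.inner_gradient_sub_nonneg (hconv : ConvexOn ℝ univ g)
    (hg : ∀ z, HasGradientAt g (g' z) z) (a b : E) :
    0 ≤ ⟪g' a - g' b, a - b⟫ := by
  have hab := hconv.inner_le_sub_of_hasGradientAt (hg a) b
  have hba := hconv.inner_le_sub_of_hasGradientAt (hg b) a
  rw [← neg_sub a b, inner_neg_right] at hab
  rw [inner_sub_left]
  linarith

lemma sub_sub_inner_le_of_inner_gradient_sub_le {K : ℝ} (hg : ∀ z, HasGradientAt g (g' z) z)
    (hK : ∀ z w, ⟪g' z - g' w, z - w⟫ ≤ K * ‖z - w‖ ^ 2) (a b : E) :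
    g b - g a - ⟪g' a, b - a⟫ ≤ K / 2 * ‖b - a‖ ^ 2 := by
  set u := b - a
  set ψ : ℝ → ℝ := fun t => g (a + t • u) - t * ⟪g' a, u⟫ - K / 2 * ‖u‖ ^ 2 * t ^ 2
  have hψ : ∀ t, HasDerivAt ψ (⟪g' (a + t • u), u⟫ - ⟪g' a, u⟫ - K * ‖u‖ ^ 2 * t) t := by
    intro t
    have h := (((hg (a + t • u)).hasDerivAt_comp_add_smul).sub
      ((hasDerivAt_id t).mul_const ⟪g' a, u⟫)).sub
      ((hasDerivAt_pow 2 t).const_mul (K / 2 * ‖u‖ ^ 2))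
    exact h.congr_deriv (by push_cast; ring)
  have hanti : AntitoneOn ψ (Icc 0 1) := by
    refine antitoneOn_of_deriv_nonpos (convex_Icc 0 1)
      (fun t _ => (hψ t).continuousAt.continuousWithinAt)
      (fun t _ => (hψ t).differentiableAt.differentiableWithinAt) fun t ht => ?_
    rw [interior_Icc] at ht
    -- the one-sided bound between `a + t • u` and `a`, divided by `t > 0`
    have key := hK (a + t • u) a
    simp only [add_sub_cancel_left, inner_smul_right, norm_smul, Real.norm_eq_abs,
      abs_of_pos ht.1, inner_sub_left] at key
    rw [(hψ t).deriv]
    nlinarith [ht.1]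
  have h := hanti (left_mem_Icc.2 zero_le_one) (right_mem_Icc.2 zero_le_one) zero_le_one
  simp only [ψ, u, zero_smul, add_zero, one_smul, add_sub_cancel, zero_mul, one_mul, sub_zero,
    ne_eq, two_ne_zero, not_false_eq_true, zero_pow, mul_zero, one_pow, mul_one] at h
  linarith

lemma ConvexOn.add_inner_add_sq_norm_gradient_sub_le {K : ℝ} (hK0 : 0 < K)
    (hconv : ConvexOn ℝ univ g) (hg : ∀ z, HasGradientAt g (g' z) z)
    (hK : ∀ z w, ⟪g' z - g' w, z - w⟫ ≤ K * ‖z - w‖ ^ 2) (a b : E) :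
    g a + ⟪g' a, b - a⟫ + ‖g' b - g' a‖ ^ 2 / (2 * K) ≤ g b := by
  set d := g' b - g' a
  -- compare the tangent plane at `a` with the quadratic upper model at `b`, at the point
  -- `b - K⁻¹ • d` where the gap between them is largest
  have hlow := hconv.inner_le_sub_of_hasGradientAt (hg a) (b - K⁻¹ • d)
  have hup := sub_sub_inner_le_of_inner_gradient_sub_le hg hK b (b - K⁻¹ • d)
  rw [show b - K⁻¹ • d - a = (b - a) - K⁻¹ • d by abel, inner_sub_right,
    inner_smul_right] at hlow
  rw [sub_sub_cancel_left, inner_neg_right, inner_smul_right, norm_neg, norm_smul,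
    Real.norm_eq_abs, abs_inv, abs_of_pos hK0] at hup
  have hd : K⁻¹ * ⟪g' b, d⟫ - K⁻¹ * ⟪g' a, d⟫ = 2 * (‖d‖ ^ 2 / (2 * K)) := by
    rw [← mul_sub, ← inner_sub_left, real_inner_self_eq_norm_sq]
    ring
  have hK : K / 2 * (K⁻¹ * ‖d‖) ^ 2 = ‖d‖ ^ 2 / (2 * K) := by field_simp
  linarith

lemma ConvexOn.sq_norm_gradient_sub_le_mul_inner {K : ℝ} (hK0 : 0 < K)
    (hconv : ConvexOn ℝ univ g) (hg : ∀ z, HasGradientAt g (g' z) z)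
    (hK : ∀ z w, ⟪g' z - g' w, z - w⟫ ≤ K * ‖z - w‖ ^ 2) (a b : E) :
    ‖g' a - g' b‖ ^ 2 ≤ K * ⟪g' a - g' b, a - b⟫ := by
  have hab := hconv.add_inner_add_sq_norm_gradient_sub_le hK0 hg hK a b
  have hba := hconv.add_inner_add_sq_norm_gradient_sub_le hK0 hg hK b a
  rw [norm_sub_rev, ← neg_sub a b, inner_neg_right] at hab
  have hhalf : ‖g' a - g' b‖ ^ 2 / (2 * K) + ‖g' a - g' b‖ ^ 2 / (2 * K)
      = ‖g' a - g' b‖ ^ 2 / K := by field_simp; ring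
  have hsum : ‖g' a - g' b‖ ^ 2 / K ≤ ⟪g' a - g' b, a - b⟫ := by
    rw [inner_sub_left]
    linarith
  rwa [div_le_iff₀' hK0] at hsum

variable {f : E → ℝ} {f' : E → E} {μ L : ℝ}

lemma HasGradientAt.sub_mul_sq_norm {G x : E} (hf : HasGradientAt f G x) (c : ℝ) :
    HasGradientAt (fun y => f y - c / 2 * ‖y‖ ^ 2) (G - c • x) x := by
  rw [hasGradientAt_iff_hasFDerivAt] at hf ⊢
  refine (hf.sub ((hasStrictFDerivAt_norm_sq x).hasFDerivAt.const_mul (c / 2))).congr_fderiv ?_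
  ext v
  simp only [sub_apply, toDual_apply_apply, smul_apply, coe_innerSL_apply, nsmul_eq_mul,
    Nat.cast_ofNat, smul_eq_mul, map_sub, map_smul, sub_right_inj]
  ring

lemma ConvexOn.mul_sq_norm_add_sq_norm_gradient_sub_le_inner
    (hsc : ConvexOn ℝ univ (fun x => f x - μ / 2 * ‖x‖ ^ 2))
    (hf : ∀ z, HasGradientAt f (f' z) z) (hlip : ∀ z w, ‖f' z - f' w‖ ≤ L * ‖z - w‖)
    (hμ : 0 < μ) (hμL : μ ≤ L) (a b : E) :
    μ * L * ‖a - b‖ ^ 2 + ‖f' a - f' b‖ ^ 2 ≤ (μ + L) * ⟪f' a - f' b, a - b⟫ := by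
  set g' : E → E := fun z => f' z - μ • z
  have hg : ∀ z, HasGradientAt (fun y => f y - μ / 2 * ‖y‖ ^ 2) (g' z) z :=
    fun z => (hf z).sub_mul_sq_norm μ
  have hg'_sub : ∀ z w, g' z - g' w = (f' z - f' w) - μ • (z - w) := fun z w => by
    simp only [g']
    module
  have hg'_inner : ∀ z w, ⟪g' z - g' w, z - w⟫ = ⟪f' z - f' w, z - w⟫ - μ * ‖z - w‖ ^ 2 := by
    intro z w
    rw [hg'_sub, inner_sub_left, real_inner_smul_left, real_inner_self_eq_norm_sq]
  have hf'_inner : ∀ z w, ⟪f' z - f' w, z - w⟫ ≤ L * ‖z - w‖ ^ 2 := fun z w =>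
    (real_inner_le_norm _ _).trans <| by
      nlinarith [mul_le_mul_of_nonneg_right (hlip z w) (norm_nonneg (z - w))]
  rcases hμL.lt_or_eq with hlt | rfl
  · have hK : ∀ z w, ⟪g' z - g' w, z - w⟫ ≤ (L - μ) * ‖z - w‖ ^ 2 := fun z w => by
      rw [hg'_inner]
      linarith [hf'_inner z w]
    have h := hsc.sq_norm_gradient_sub_le_mul_inner (sub_pos.2 hlt) hg hK a b
    rw [hg'_inner, hg'_sub, norm_sub_sq_real, real_inner_smul_right, norm_smul,
      Real.norm_eq_abs, abs_of_pos hμ] at h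
    linear_combination h
  · have hmono := hsc.inner_gradient_sub_nonneg hg a b
    rw [hg'_inner] at hmono
    have hsq : ‖f' a - f' b‖ ^ 2 ≤ (μ * ‖a - b‖) ^ 2 :=
      pow_le_pow_left₀ (norm_nonneg _) (hlip a b) 2
    nlinarith

lemma ConvexOn.norm_sub_smul_gradient_sub_sq_le
    (hsc : ConvexOn ℝ univ (fun x => f x - μ / 2 * ‖x‖ ^ 2))
    (hf : ∀ z, HasGradientAt f (f' z) z) (hlip : ∀ z w, ‖f' z - f' w‖ ≤ L * ‖z - w‖)
    (hμ : 0 < μ) (hμL : μ ≤ L) {α : ℝ} (hα : 0 ≤ α) (hαμL : α * (μ + L) ≤ 2) (a b : E) :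
    ‖(a - α • f' a) - (b - α • f' b)‖ ^ 2 ≤ (1 - α * (2 * μ * L / (μ + L))) * ‖a - b‖ ^ 2 := by
  have hS : 0 < μ + L := by linarith
  have key := hsc.mul_sq_norm_add_sq_norm_gradient_sub_le_inner hf hlip hμ hμL a b
  have hexpand : ‖(a - α • f' a) - (b - α • f' b)‖ ^ 2
      = ‖a - b‖ ^ 2 - 2 * α * ⟪f' a - f' b, a - b⟫ + α ^ 2 * ‖f' a - f' b‖ ^ 2 := by
    rw [show (a - α • f' a) - (b - α • f' b) = (a - b) - α • (f' a - f' b) by module,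
      norm_sub_sq_real, real_inner_smul_right, norm_smul, Real.norm_eq_abs, abs_of_nonneg hα,
      real_inner_comm]
    ring
  have hrate : (μ + L) * ((1 - α * (2 * μ * L / (μ + L))) * ‖a - b‖ ^ 2)
      = (μ + L) * ‖a - b‖ ^ 2 - 2 * α * (μ * L * ‖a - b‖ ^ 2) := by
    field_simp
  rw [hexpand, ← mul_le_mul_iff_right₀ hS, hrate]
  nlinarith [mul_le_mul_of_nonneg_left key (by positivity : (0 : ℝ) ≤ 2 * α),
    mul_le_mul_of_nonneg_right hαμL (by positivity : (0 : ℝ) ≤ α * ‖f' a - f' b‖ ^ 2)]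

end GradientInequalities

lemma one_sub_mul_two_mul_mul_div_add_mem_Ico {μ L α : ℝ} (hμ : 0 < μ) (hL : 0 < L)
    (hα : 0 < α) (hαμL : α * (μ + L) ≤ 2) :
    1 - α * (2 * μ * L / (μ + L)) ∈ Ico 0 1 := by
  have hS : 0 < μ + L := by linarith
  refine ⟨?_, sub_lt_self 1 (by positivity)⟩
  rw [sub_nonneg, mul_div_assoc', div_le_one hS]
  nlinarith [mul_le_mul_of_nonneg_left hαμL (by positivity : (0 : ℝ) ≤ 2 * μ * L),
    sq_nonneg (μ - L)]

lemma le_rpow_half_mul_of_sq_le_pow_mul_sq {a b r : ℝ} {k : ℕ} (hr : 0 ≤ r) (hb : 0 ≤ b)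
    (h : a ^ 2 ≤ r ^ k * b ^ 2) :
    a ≤ r ^ ((k : ℝ) / 2) * b := by
  refine le_of_pow_le_pow_left₀ two_ne_zero (by positivity) (h.trans_eq ?_)
  rw [mul_pow, ← Real.rpow_mul_natCast hr, Nat.cast_ofNat, div_mul_cancel₀ _ two_ne_zero,
    Real.rpow_natCast]

/-- Q-linear convergence of steepest descent: under μ-strong convexity, an
L-Lipschitz gradient, `0 < μ ≤ L`, `∇f(x*) = 0`, `c₁ = 2/(μ+L)`,
`c₂ = 2μL/(μ+L)`, and a step size `0 < α ≤ c₁` (so `0 ≤ 1 − αc₂ < 1`), the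
iterates `x(k+1) = x(k) − α∇f(x(k))` satisfy
`‖x(k) − x*‖ ≤ (1 − αc₂)^(k/2) ‖x(0) − x*‖` for all `k`. -/
theorem steepest_descent_q_linear_convergence
    (n : ℕ) (f : EuclideanSpace ℝ (Fin n) → ℝ) (μ L : ℝ)
    (hμ : 0 < μ) (hμL : μ ≤ L)
    (hdiff : Differentiable ℝ f)
    (hsc : ConvexOn ℝ Set.univ (fun x => f x - μ / 2 * ‖x‖ ^ 2))
    (hlip : ∀ x y : EuclideanSpace ℝ (Fin n),
      ‖gradient f x - gradient f y‖ ≤ L * ‖x - y‖)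
    (xstar : EuclideanSpace ℝ (Fin n)) (hxstar : gradient f xstar = 0)
    (c₁ c₂ : ℝ) (hc₁ : c₁ = 2 / (μ + L)) (hc₂ : c₂ = 2 * μ * L / (μ + L))
    (α : ℝ) (hα0 : 0 < α) (hα1 : α ≤ c₁)
    (x : ℕ → EuclideanSpace ℝ (Fin n))
    (hiter : ∀ k : ℕ, x (k + 1) = x k - α • gradient f (x k)) :
    (0 ≤ 1 - α * c₂ ∧ 1 - α * c₂ < 1) ∧
      ∀ k : ℕ, ‖x k - xstar‖ ≤ (1 - α * c₂) ^ ((k : ℝ) / 2) * ‖x 0 - xstar‖ := by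
  have hα : α * (μ + L) ≤ 2 := (le_div_iff₀ (by linarith)).1 (hc₁ ▸ hα1)
  subst hc₂
  have hrate := one_sub_mul_two_mul_mul_div_add_mem_Ico hμ (hμ.trans_le hμL) hα0 hα
  have hstep : ∀ k, ‖x (k + 1) - xstar‖ ^ 2
      ≤ (1 - α * (2 * μ * L / (μ + L))) * ‖x k - xstar‖ ^ 2 := fun k => by
    rw [hiter]
    simpa only [hxstar, smul_zero, sub_zero] using hsc.norm_sub_smul_gradient_sub_sq_le
      (fun z => (hdiff z).hasGradientAt) hlip hμ hμL hα0.le hα (x k) xstar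
  exact ⟨hrate, fun k => le_rpow_half_mul_of_sq_le_pow_mul_sq hrate.1 (norm_nonneg _)
    (le_geom (u := fun j => ‖x j - xstar‖ ^ 2) hrate.1 k fun j _ => hstep j)⟩
end

section
/- Let Q be a symmetric positive definite n×n real matrix, b ∈ ℝⁿ, and f(x) = (1/2)xᵀQx − xᵀb. Let d(0), …, d(n−1) be nonzero mutually Q-conjugate vectors in ℝⁿ, and define iterates by x(k+1) = x(k) + α(k)d(k) with exact line-search step sizes α(k) = −g(k)ᵀd(k)/(d(k)ᵀQd(k)), where g(k) = ∇f(x(k)) = Qx(k) − b. Then for any starting point x(0) ∈ ℝⁿ, the iterate after n steps is the unique minimizer of f: x(n) = Q⁻¹b. -/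
/-!
Each exact line search makes the new gradient orthogonal to the current direction, and since
`g(k+1) - g(k) = α(k) Q d(k)` is orthogonal to every other direction by conjugacy, this
orthogonality persists through all later steps. Hence `g(n)` is orthogonal to all the `d(k)`,
which are linearly independent (by conjugacy and positive definiteness) and so span `ℝⁿ`.
Therefore `g(n) = Q x(n) - b = 0`.
-/

open Matrix

section ConjugateDirections

variable {K ι : Type*} [Field K] [Fintype ι]

theorem Matrix.linearIndependent_of_pairwise_dotProduct_mulVec_eq_zero [DecidableEq ι]
    {κ : Type*} {Q : Matrix ι ι K} {d : κ → ι → K}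
    (hconj : Pairwise fun i j => d i ⬝ᵥ Q *ᵥ d j = 0)
    (hdiag : ∀ i, d i ⬝ᵥ Q *ᵥ d i ≠ 0) : LinearIndependent K d :=
  LinearMap.BilinForm.linearIndependent_of_iIsOrtho (B := Q.toBilin')
    (fun i j hij => by simpa [toBilin'_apply'] using hconj hij)
    (fun i => by simpa [toBilin'_apply'] using hdiag i)

theorem Matrix.eq_zero_of_dotProduct_eq_zero_of_span_eq_top {κ : Type*} {v : κ → ι → K}
    (hv : Submodule.span K (Set.range v) = ⊤) {w : ι → K} (hw : ∀ i, w ⬝ᵥ v i = 0) :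
    w = 0 := by
  have h : dotProductBilin K K w = 0 := LinearMap.ext_on_range hv (by simpa using hw)
  exact dotProduct_eq_zero_iff.mp fun u => by simpa using LinearMap.congr_fun h u

variable (Q : Matrix ι ι K) (b : ι → K)

theorem Matrix.mulVec_add_smul_sub_dotProduct (x d v : ι → K) (α : K) :
    (Q *ᵥ (x + α • d) - b) ⬝ᵥ v = (Q *ᵥ x - b) ⬝ᵥ v + α * (v ⬝ᵥ Q *ᵥ d) := by
  rw [mulVec_add, mulVec_smul, add_sub_right_comm, add_dotProduct, smul_dotProduct,
    dotProduct_comm (Q *ᵥ d), smul_eq_mul]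

theorem Matrix.mulVec_sub_dotProduct_eq_zero_of_exact_line_search {x d : ι → K}
    (hd : d ⬝ᵥ Q *ᵥ d ≠ 0) :
    (Q *ᵥ (x + (-((Q *ᵥ x - b) ⬝ᵥ d / (d ⬝ᵥ Q *ᵥ d))) • d) - b) ⬝ᵥ d = 0 := by
  rw [mulVec_add_smul_sub_dotProduct]
  field_simp
  ring

theorem Matrix.mulVec_sub_dotProduct_conjugate_direction_eq_zero {m : ℕ} {d : Fin m → ι → K}
    {x : ℕ → ι → K} (hdiag : ∀ k, d k ⬝ᵥ Q *ᵥ d k ≠ 0)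
    (hconj : Pairwise fun i j => d i ⬝ᵥ Q *ᵥ d j = 0)
    (hiter : ∀ k : Fin m,
      x (k + 1) = x k + (-((Q *ᵥ x k - b) ⬝ᵥ d k / (d k ⬝ᵥ Q *ᵥ d k))) • d k)
    (k : Fin m) {j : ℕ} (hkj : k < j) (hjm : j ≤ m) : (Q *ᵥ x j - b) ⬝ᵥ d k = 0 := by
  induction j, hkj using Nat.le_induction with
  | base => rw [hiter k]; exact mulVec_sub_dotProduct_eq_zero_of_exact_line_search Q b (hdiag k)
  | succ j hkj ih =>
    have hj : (⟨j, hjm⟩ : Fin m) ≠ k := fun h => by simp [← h] at hkj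
    rw [show j + 1 = (⟨j, hjm⟩ : Fin m) + 1 from rfl, hiter, mulVec_add_smul_sub_dotProduct,
      hconj hj.symm, mul_zero, add_zero]
    exact ih (Nat.le_of_lt hjm)

end ConjugateDirections

theorem conjugate_direction_method_converges_in_n_steps_general
    (n : ℕ) (Q : Matrix (Fin n) (Fin n) ℝ)
    (hQ : Q.PosDef) (b : Fin n → ℝ)
    (d : Fin n → (Fin n → ℝ)) (hne : ∀ i, d i ≠ 0)
    (hconj : ∀ i j, i ≠ j → d i ⬝ᵥ Q.mulVec (d j) = 0)
    (x : ℕ → (Fin n → ℝ))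
    (hiter : ∀ k : Fin n,
      x (k + 1) = x k +
        (-(((Q.mulVec (x k) - b) ⬝ᵥ d k) / (d k ⬝ᵥ Q.mulVec (d k)))) • d k) :
    x n = Q⁻¹.mulVec b := by
  have hdiag : ∀ k, d k ⬝ᵥ Q *ᵥ d k ≠ 0 := fun k => by
    simpa using (hQ.dotProduct_mulVec_pos (hne k)).ne'
  have hspan : Submodule.span ℝ (Set.range d) = ⊤ :=
    (linearIndependent_of_pairwise_dotProduct_mulVec_eq_zero hconj hdiag
      ).span_eq_top_of_card_eq_finrank' (by simp)
  have hgrad : Q *ᵥ x n - b = 0 := eq_zero_of_dotProduct_eq_zero_of_span_eq_top hspan fun k =>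
    mulVec_sub_dotProduct_conjugate_direction_eq_zero Q b hdiag hconj hiter k k.isLt le_rfl
  have := hQ.isUnit.invertible
  exact (inv_mulVec_eq_vec (sub_eq_zero.mp hgrad).symm).symm

/-- The conjugate direction method minimizes the quadratic
`f(x) = ½ xᵀQx − xᵀb` in `n` steps: with nonzero mutually Q-conjugate
directions `d(0), …, d(n−1)`, iterates `x(k+1) = x(k) + α(k)d(k)` and exact
line-search step sizes `α(k) = −g(k)ᵀd(k)/(d(k)ᵀQd(k))` where
`g(k) = Qx(k) − b`, starting from any `x(0)`, one has `x(n) = Q⁻¹b`. -/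
theorem conjugate_direction_method_converges_in_n_steps
    (n : ℕ) (Q : Matrix (Fin n) (Fin n) ℝ) (hQsymm : Q.IsSymm)
    (hQ : Q.PosDef) (b : Fin n → ℝ)
    (d : Fin n → (Fin n → ℝ)) (hne : ∀ i, d i ≠ 0)
    (hconj : ∀ i j, i ≠ j → d i ⬝ᵥ Q.mulVec (d j) = 0)
    (x : ℕ → (Fin n → ℝ))
    (hiter : ∀ k : Fin n,
      x (k + 1) = x k +
        (-(((Q.mulVec (x k) - b) ⬝ᵥ d k) / (d k ⬝ᵥ Q.mulVec (d k)))) • d k) :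
    x n = Q⁻¹.mulVec b :=
  conjugate_direction_method_converges_in_n_steps_general n Q hQ b d hne hconj x hiter
end
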